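/- arXiv:2110.08199 — 2 statements merged into one kernel-verified Lean document; each statement's English description precedes it below -/
import Mathlib

section
/- Let C ≥ 1 and let (X_n) be a sequence of compact, rectifiably path-connected subsets of ℝᵐ, each of which is C-LNE, converging in the Hausdorff distance to a compact set X₀. Then X₀ is C-LNE with the same constant C: for every pair of points v, w ∈ X₀ there exists a rectifiable path α in X₀ joining v to w with length(α) ≤ C‖v − w‖, and hence d_{X₀}(v,w) ≤ C‖v − w‖. -/
open Metric Set Filter Topology ENNReal

/-- The length of a path in a subset `A` of a (pseudo-e)metric space, measured
in the ambient space as the total variation of the path. -/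
noncomputable def pathLength {E : Type*} [PseudoEMetricSpace E] {A : Set E} {p q : A}
    (γ : Path p q) : ℝ≥0∞ :=
  eVariationOn (fun t : unitInterval => (γ t : E)) Set.univ

/-- The inner (length) distance between two points of `A`: the infimum of lengths of
paths in `A` joining them. -/
noncomputable def innerDist {E : Type*} [PseudoEMetricSpace E] (A : Set E) (p q : A) : ℝ≥0∞ :=
  ⨅ γ : Path p q, pathLength γ

/-- `A` is Lipschitz normally embedded with constant `C`. -/
def IsLNE {E : Type*} [NormedAddCommGroup E] (C : ℝ) (A : Set E) : Prop :=
  ∀ p q : A, innerDist A p q ≤ ENNReal.ofReal (C * ‖(p : E) - (q : E)‖)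

/-- Any two points of `A` are joined by a rectifiable (finite-length) path in `A`. -/
def RectifiablyPathConnected {E : Type*} [NormedAddCommGroup E] (A : Set E) : Prop :=
  ∀ p q : A, ∃ γ : Path p q, pathLength γ ≠ ⊤

/-- Every based loop in `A` is homotopic (rel basepoint) to a rectifiable loop. -/
def LoopsRectifiable {E : Type*} [NormedAddCommGroup E] (A : Set E) : Prop :=
  ∀ (x : A) (γ : Path x x), ∃ γ' : Path x x, Path.Homotopic γ γ' ∧ pathLength γ' ≠ ⊤

/-- `ε₀(Y)`: the supremum of all `ε` such that every loop in `Y` of length `< ε`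
is null-homotopic in `Y`. -/
noncomputable def eps0 {E : Type*} [NormedAddCommGroup E] (Y : Set E) : ℝ≥0∞ :=
  sSup {ε : ℝ≥0∞ | ∀ (x : Y) (γ : Path x x),
    pathLength γ < ε → Path.Homotopic γ (Path.refl x)}

/-!
Choose `pₙ, qₙ ∈ Xₙ` converging to `v, w`. Since `Xₙ` is `C`-LNE they are joined in `Xₙ` by paths
of length at most `Kₙ = C‖pₙ - qₙ‖ + 1/(n+1)`, which after reparametrization by arc length are
`Kₙ`-Lipschitz maps `[0,1] → Xₙ`. These maps eventually take values in the compact set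
`cthickening 1 X₀`, so they converge pointwise along an ultrafilter finer than `atTop`; the limit
lies in `X₀`, joins `v` to `w` and, since Lipschitz bounds pass to pointwise limits, is
`C‖v - w‖`-Lipschitz. This pointwise ultrafilter limit replaces the Arzelà–Ascoli extraction.
-/

open scoped NNReal

theorem ContinuousOn.continuousOn_variationOnFromTo {α E : Type*} [LinearOrder α]
    [TopologicalSpace α] [OrderTopology α] [PseudoMetricSpace E] {f : α → E} {s : Set α} {a : α}
    (hf : ContinuousOn f s) (hbv : LocallyBoundedVariationOn f s) (ha : a ∈ s) :
    ContinuousOn (variationOnFromTo f s a) s := by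
  intro b hb
  have hleft : ContinuousWithinAt (variationOnFromTo f s a) (s ∩ Iio b) b := by
    have := variationOnFromTo.tendsto_left ha hb hbv ((hf b hb).mono inter_subset_left)
    rwa [dist_self, sub_zero] at this
  have hright : ContinuousWithinAt (variationOnFromTo f s a) (s ∩ Ioi b) b := by
    have := variationOnFromTo.tendsto_right ha hb hbv ((hf b hb).mono inter_subset_left)
    rwa [dist_self, add_zero] at this
  refine (continuousWithinAt_insert_self.2 (hleft.union hright)).mono fun x hx => ?_
  rcases lt_trichotomy x b with h | h | h
  · exact Or.inr (Or.inl ⟨hx, h⟩)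
  · exact Or.inl h
  · exact Or.inr (Or.inr ⟨hx, h⟩)

theorem HasConstantSpeedOnWith.lipschitzOnWith {E : Type*} [PseudoEMetricSpace E] {f : ℝ → E}
    {s : Set ℝ} {l : ℝ≥0} (h : HasConstantSpeedOnWith f s l) : LipschitzOnWith l f s := by
  have key : ∀ x ∈ s, ∀ y ∈ s, x ≤ y → edist (f x) (f y) ≤ l * edist x y := by
    intro x hx y hy hxy
    calc edist (f x) (f y) ≤ eVariationOn f (s ∩ Icc x y) :=
          eVariationOn.edist_le f ⟨hx, le_rfl, hxy⟩ ⟨hy, hxy, le_rfl⟩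
      _ = ENNReal.ofReal (l * (y - x)) := h hx hy
      _ = l * edist x y := by
          rw [ENNReal.ofReal_mul l.coe_nonneg, ofReal_coe_nnreal, edist_dist, Real.dist_eq,
            abs_sub_comm, abs_of_nonneg (sub_nonneg.2 hxy)]
  intro x hx y hy
  rcases le_total x y with hxy | hyx
  · exact key x hx y hy hxy
  · rw [edist_comm, edist_comm x]
    exact key y hy x hx hyx

theorem exists_lipschitzOnWith_of_eVariationOn_Icc_le {E : Type*} [MetricSpace E] {f : ℝ → E}
    {K : ℝ≥0} (hf : ContinuousOn f (Icc 0 1)) (hK : eVariationOn f (Icc 0 1) ≤ K) :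
    ∃ g : ℝ → E, LipschitzOnWith K g (Icc 0 1) ∧ MapsTo g (Icc 0 1) (f '' Icc 0 1) ∧
      g 0 = f 0 ∧ g 1 = f 1 := by
  set s : Set ℝ := Icc 0 1
  have h0 : (0 : ℝ) ∈ s := left_mem_Icc.2 zero_le_one
  have h1 : (1 : ℝ) ∈ s := right_mem_Icc.2 zero_le_one
  have hbv : LocallyBoundedVariationOn f s :=
    BoundedVariationOn.locallyBoundedVariationOn (ne_top_of_le_ne_top coe_ne_top hK)
  set φ := variationOnFromTo f s 0
  set ℓ := φ 1
  have hφ0 : φ 0 = 0 := variationOnFromTo.self f s 0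
  have hℓK : ℓ ≤ K := by
    rw [← inter_self s] at hK
    exact (variationOnFromTo.eq_of_le f s zero_le_one).trans_le (toReal_le_coe_of_le_coe hK)
  have hφs : φ '' s = Icc 0 ℓ := by
    refine Subset.antisymm (image_subset_iff.2 fun t ht => ?_) ?_
    · have hmono := variationOnFromTo.monotoneOn hbv h0
      exact ⟨hφ0 ▸ hmono h0 ht ht.1, hmono ht h1 ht.2⟩
    · calc Icc 0 ℓ = Icc (φ 0) (φ 1) := by rw [hφ0]
        _ ⊆ φ '' s := intermediate_value_Icc zero_le_one (hf.continuousOn_variationOnFromTo hbv h0)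
  set ψ := naturalParameterization f s 0
  have hψ : LipschitzOnWith 1 ψ (Icc 0 ℓ) :=
    hφs ▸ (has_unit_speed_naturalParameterization f hbv h0).lipschitzOnWith
  have hψφ : ∀ t ∈ s, ψ (φ t) = f t := fun t ht =>
    edist_eq_zero.1 (edist_naturalParameterization_eq_zero hbv h0 ht)
  have hℓ : 0 ≤ ℓ := hφ0 ▸ variationOnFromTo.monotoneOn hbv h0 h0 h1 zero_le_one
  have hscale : MapsTo (ℓ * ·) s (Icc 0 ℓ) := fun t ht =>
    ⟨mul_nonneg hℓ ht.1, mul_le_of_le_one_right hℓ ht.2⟩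
  refine ⟨fun t => ψ (ℓ * t), ?_, ?_, ?_, ?_⟩
  · refine LipschitzOnWith.of_dist_le_mul fun x hx y hy => ?_
    calc dist (ψ (ℓ * x)) (ψ (ℓ * y)) ≤ 1 * dist (ℓ * x) (ℓ * y) :=
          hψ.dist_le_mul _ (hscale hx) _ (hscale hy)
      _ = ℓ * dist x y := by
          rw [one_mul, Real.dist_eq, Real.dist_eq, ← mul_sub, abs_mul, abs_of_nonneg hℓ]
      _ ≤ K * dist x y := by gcongr
  · intro t ht
    have : ℓ * t ∈ φ '' s := hφs ▸ hscale ht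
    exact ⟨_, Function.invFunOn_mem this, rfl⟩
  · simpa [hφ0] using hψφ 0 h0
  · simpa using hψφ 1 h1

theorem Path.exists_lipschitzOnWith_of_pathLength_le {E : Type*} [MetricSpace E] {A : Set E}
    {p q : A} (γ : Path p q) {K : ℝ≥0} (hγ : pathLength γ ≤ K) :
    ∃ f : ℝ → E, LipschitzOnWith K f (Icc 0 1) ∧ MapsTo f (Icc 0 1) A ∧ f 0 = p ∧ f 1 = q := by
  set g : ℝ → E := fun t => (γ.extend t : E)
  have hg : eVariationOn g (Icc 0 1) = pathLength γ := by
    have himage : projIcc (0 : ℝ) 1 zero_le_one '' Icc 0 1 = univ :=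
      (projIcc_surjOn zero_le_one).image_eq_of_mapsTo (mapsTo_univ _ _)
    rw [pathLength, ← himage]
    exact eVariationOn.comp_eq_of_monotoneOn (fun t : unitInterval => (γ t : E)) _
      ((monotone_projIcc _).monotoneOn _)
  obtain ⟨f, hfK, hfA, hf0, hf1⟩ := exists_lipschitzOnWith_of_eVariationOn_Icc_le
    (continuous_subtype_val.comp γ.extend.continuous).continuousOn (hg ▸ hγ)
  refine ⟨f, hfK, fun t ht => ?_, by simp [hf0], by simp [hf1]⟩
  obtain ⟨u, -, hu⟩ := hfA ht
  exact hu ▸ (γ.extend u).2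

theorem LipschitzOnWith.exists_path_pathLength_le {E : Type*} [PseudoEMetricSpace E] {A : Set E}
    {p q : A} {K : ℝ≥0} {f : ℝ → E} (hf : LipschitzOnWith K f (Icc 0 1))
    (hfA : MapsTo f (Icc 0 1) A) (h0 : f 0 = p) (h1 : f 1 = q) :
    ∃ γ : Path p q, pathLength γ ≤ K := by
  refine ⟨{ toFun := fun t => ⟨f t, hfA t.2⟩
            continuous_toFun :=
              (hf.continuousOn.comp_continuous continuous_subtype_val Subtype.prop).subtype_mk _
            source' := Subtype.ext h0
            target' := Subtype.ext h1 }, ?_⟩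
  have hid : eVariationOn (id : ℝ → ℝ) (Icc 0 1) = 1 := by
    have := monotoneOn_id.eVariationOn_eq (left_mem_Icc.2 zero_le_one)
      (right_mem_Icc.2 (zero_le_one' ℝ))
    rwa [inter_self, id, id, sub_zero, ENNReal.ofReal_one] at this
  calc _ = eVariationOn f (Icc 0 1) :=
        (eVariationOn.comp_eq_of_monotoneOn f ((↑) : Icc (0 : ℝ) 1 → ℝ)
          ((Subtype.mono_coe _).monotoneOn univ)).trans
          (by rw [Subtype.coe_image_univ])
    _ = eVariationOn (f ∘ id) (Icc 0 1) := rfl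
    _ ≤ K * eVariationOn id (Icc 0 1) := hf.comp_eVariationOn_le (mapsTo_id _)
    _ = K := by rw [hid, mul_one]

theorem IsLNE.exists_lipschitzOnWith {E : Type*} [NormedAddCommGroup E] {C : ℝ} {A : Set E}
    (hA : IsLNE C A) {p q : E} (hp : p ∈ A) (hq : q ∈ A) {δ : ℝ≥0} (hδ : 0 < δ) :
    ∃ f : ℝ → E, LipschitzOnWith ((C * ‖p - q‖).toNNReal + δ) f (Icc 0 1) ∧
      MapsTo f (Icc 0 1) A ∧ f 0 = p ∧ f 1 = q := by
  obtain ⟨γ, hγ⟩ : ∃ γ : Path (⟨p, hp⟩ : A) ⟨q, hq⟩,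
      pathLength γ < ((C * ‖p - q‖).toNNReal + δ : ℝ≥0) := by
    refine iInf_lt_iff.1 ((hA ⟨p, hp⟩ ⟨q, hq⟩).trans_lt ?_)
    exact ENNReal.coe_lt_coe.2 (lt_add_of_pos_right _ hδ)
  exact γ.exists_lipschitzOnWith_of_pathLength_le hγ.le

section HausdorffLimit

variable {E : Type*} {X : ℕ → Set E} {X₀ : Set E}

theorem exists_tendsto_of_tendsto_hausdorffEDist [PseudoEMetricSpace E]
    (hconv : Tendsto (fun n => hausdorffEDist (X n) X₀) atTop (𝓝 0)) {x : E} (hx : x ∈ X₀) :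
    ∃ p : ℕ → E, (∀ᶠ n in atTop, p n ∈ X n) ∧ Tendsto p atTop (𝓝 x) := by
  have hfin : ∀ᶠ n in atTop, hausdorffEDist (X n) X₀ < ⊤ := hconv.eventually_lt_const zero_lt_top
  have hnear : ∀ n, ∃ y, hausdorffEDist (X n) X₀ < ⊤ →
      y ∈ X n ∧ edist y x < hausdorffEDist (X n) X₀ + (n : ℝ≥0∞)⁻¹ := by
    intro n
    by_cases h : hausdorffEDist (X n) X₀ < ⊤
    · have hlt : hausdorffEDist X₀ (X n) < hausdorffEDist (X n) X₀ + (n : ℝ≥0∞)⁻¹ := by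
        rw [hausdorffEDist_comm]
        exact ENNReal.lt_add_right h.ne (by simp)
      obtain ⟨y, hy, hxy⟩ := exists_edist_lt_of_hausdorffEDist_lt hx hlt
      exact ⟨y, fun _ => ⟨hy, edist_comm x y ▸ hxy⟩⟩
    · exact ⟨x, fun h' => absurd h' h⟩
  choose p hp using hnear
  refine ⟨p, hfin.mono fun n hn => (hp n hn).1, ?_⟩
  have hbound : Tendsto (fun n : ℕ => hausdorffEDist (X n) X₀ + (n : ℝ≥0∞)⁻¹) atTop (𝓝 0) := by
    simpa using hconv.add ENNReal.tendsto_inv_nat_nhds_zero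
  exact tendsto_iff_edist_tendsto_0.2 <| tendsto_of_tendsto_of_tendsto_of_le_of_le'
    tendsto_const_nhds hbound (.of_forall fun _ => zero_le) (hfin.mono fun n hn => (hp n hn).2.le)

variable [MetricSpace E] [ProperSpace E]

theorem exists_mem_tendsto_ultrafilter_of_tendsto_hausdorffEDist (hX₀ : IsCompact X₀)
    (hconv : Tendsto (fun n => hausdorffEDist (X n) X₀) atTop (𝓝 0)) {𝒰 : Ultrafilter ℕ}
    (h𝒰 : (𝒰 : Filter ℕ) ≤ atTop) {x : ℕ → E} (hx : ∀ᶠ n in atTop, x n ∈ X n) :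
    ∃ y ∈ X₀, Tendsto x 𝒰 (𝓝 y) := by
  have hdist : Tendsto (fun n => infEDist (x n) X₀) atTop (𝓝 0) :=
    tendsto_of_tendsto_of_tendsto_of_le_of_le' tendsto_const_nhds hconv
      (.of_forall fun _ => zero_le) (hx.mono fun n hn => infEDist_le_hausdorffEDist_of_mem hn)
  have hK : ∀ᶠ n in 𝒰, x n ∈ cthickening 1 X₀ :=
    Eventually.filter_mono h𝒰 <| (hdist.eventually_lt_const (by simp)).mono fun n hn =>
      mem_cthickening_iff.2 hn.le
  obtain ⟨y, -, hy⟩ := hX₀.cthickening.ultrafilter_le_nhds (𝒰.map x)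
    (by rw [Ultrafilter.coe_map, le_principal_iff]; exact hK)
  refine ⟨y, (mem_iff_infEDist_zero_of_closed hX₀.isClosed).2 ?_, hy⟩
  exact tendsto_nhds_unique ((continuous_infEDist.tendsto y).comp hy) (hdist.mono_left h𝒰)

theorem exists_lipschitzOnWith_of_tendsto_hausdorffEDist {α : Type*} [PseudoMetricSpace α]
    [Nonempty E] (hX₀ : IsCompact X₀) (hconv : Tendsto (fun n => hausdorffEDist (X n) X₀) atTop (𝓝 0))
    {s : Set α} {f : ℕ → α → E} {K : ℕ → ℝ≥0} {K₀ : ℝ≥0} (hK : Tendsto K atTop (𝓝 K₀))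
    (hf : ∀ᶠ n in atTop, LipschitzOnWith (K n) (f n) s ∧ MapsTo (f n) s (X n)) :
    ∃ g : α → E, LipschitzOnWith K₀ g s ∧ MapsTo g s X₀ ∧
      ∀ t ∈ s, ∀ y, Tendsto (fun n => f n t) atTop (𝓝 y) → g t = y := by
  set 𝒰 := Ultrafilter.of (atTop : Filter ℕ)
  have h𝒰 : (𝒰 : Filter ℕ) ≤ atTop := Ultrafilter.of_le _
  have hlim : ∀ t ∈ s, ∃ y ∈ X₀, Tendsto (fun n => f n t) 𝒰 (𝓝 y) := fun t ht =>
    exists_mem_tendsto_ultrafilter_of_tendsto_hausdorffEDist hX₀ hconv h𝒰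
      (hf.mono fun n hn => hn.2 ht)
  choose! g hgX hg using hlim
  refine ⟨g, fun x hx y hy => ?_, hgX, fun t ht y hy =>
    tendsto_nhds_unique (hg t ht) (hy.mono_left h𝒰)⟩
  refine le_of_tendsto_of_tendsto ((hg x hx).edist (hg y hy))
    (ENNReal.Tendsto.mul_const (ENNReal.tendsto_coe.2 (hK.mono_left h𝒰))
      (.inr (edist_ne_top x y))) ?_
  exact (hf.filter_mono h𝒰).mono fun n hn => hn.1 hx hy

end HausdorffLimit

theorem IsLNE.exists_path_of_tendsto_hausdorffEDist {E : Type*} [NormedAddCommGroup E]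
    [ProperSpace E] {C : ℝ} {X : ℕ → Set E} {X₀ : Set E} (hL : ∀ n, IsLNE C (X n))
    (hX₀ : IsCompact X₀) (hconv : Tendsto (fun n => hausdorffEDist (X n) X₀) atTop (𝓝 0))
    (v w : X₀) : ∃ γ : Path v w, pathLength γ ≤ ENNReal.ofReal (C * ‖(v : E) - w‖) := by
  obtain ⟨p, hpX, hpv⟩ := exists_tendsto_of_tendsto_hausdorffEDist hconv v.2
  obtain ⟨q, hqX, hqw⟩ := exists_tendsto_of_tendsto_hausdorffEDist hconv w.2
  set K : ℕ → ℝ≥0 := fun n => (C * ‖p n - q n‖).toNNReal + 1 / (n + 1)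
  have hK : Tendsto K atTop (𝓝 (C * ‖(v : E) - w‖).toNNReal) := by
    simpa [K, one_div] using ((continuous_real_toNNReal.tendsto _).comp
      (((hpv.sub hqw).norm).const_mul C)).add tendsto_one_div_add_atTop_nhds_zero_nat
  have hpaths : ∀ n, ∃ f : ℝ → E, p n ∈ X n ∧ q n ∈ X n → LipschitzOnWith (K n) f (Icc 0 1) ∧
      MapsTo f (Icc 0 1) (X n) ∧ f 0 = p n ∧ f 1 = q n := by
    intro n
    by_cases h : p n ∈ X n ∧ q n ∈ X n
    · obtain ⟨f, hf⟩ := (hL n).exists_lipschitzOnWith h.1 h.2 (δ := 1 / (n + 1)) (by positivity)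
      exact ⟨f, fun _ => hf⟩
    · exact ⟨fun _ => v, fun h' => absurd h' h⟩
  choose f hf using hpaths
  have hfn := (hpX.and hqX).mono fun n hn => hf n hn
  obtain ⟨g, hgK, hgX, hg⟩ := exists_lipschitzOnWith_of_tendsto_hausdorffEDist hX₀ hconv hK
    (hfn.mono fun n hn => ⟨hn.1, hn.2.1⟩)
  have hg0 : g 0 = v := hg 0 (left_mem_Icc.2 zero_le_one) v <|
    hpv.congr' (hfn.mono fun n hn => hn.2.2.1.symm)
  have hg1 : g 1 = w := hg 1 (right_mem_Icc.2 zero_le_one) w <|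
    hqw.congr' (hfn.mono fun n hn => hn.2.2.2.symm)
  exact hgK.exists_path_pathLength_le hgX hg0 hg1

theorem stmt3_general {m : ℕ} (C : ℝ)
    (X : ℕ → Set (EuclideanSpace ℝ (Fin m))) (X₀ : Set (EuclideanSpace ℝ (Fin m)))
    (hL : ∀ n, IsLNE C (X n)) (hX₀c : IsCompact X₀)
    (hconv : Tendsto (fun n => EMetric.hausdorffEdist (X n) X₀) atTop (𝓝 0)) :
    ∀ v w : X₀,
      (∃ γ : Path v w,
        pathLength γ ≤ ENNReal.ofReal (C * ‖(v : EuclideanSpace ℝ (Fin m)) - (w : EuclideanSpace ℝ (Fin m))‖)) ∧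
      innerDist X₀ v w ≤
        ENNReal.ofReal (C * ‖(v : EuclideanSpace ℝ (Fin m)) - (w : EuclideanSpace ℝ (Fin m))‖) := by
  intro v w
  obtain ⟨γ, hγ⟩ := IsLNE.exists_path_of_tendsto_hausdorffEDist hL hX₀c hconv v w
  exact ⟨⟨γ, hγ⟩, (iInf_le _ γ).trans hγ⟩

theorem stmt3 {m : ℕ} (C : ℝ) (hC : 1 ≤ C)
    (X : ℕ → Set (EuclideanSpace ℝ (Fin m))) (X₀ : Set (EuclideanSpace ℝ (Fin m)))
    (hc : ∀ n, IsCompact (X n)) (hp : ∀ n, RectifiablyPathConnected (X n))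
    (hL : ∀ n, IsLNE C (X n)) (hX₀c : IsCompact X₀)
    (hconv : Tendsto (fun n => EMetric.hausdorffEdist (X n) X₀) atTop (𝓝 0)) :
    ∀ v w : X₀,
      (∃ γ : Path v w,
        pathLength γ ≤ ENNReal.ofReal (C * ‖(v : EuclideanSpace ℝ (Fin m)) - (w : EuclideanSpace ℝ (Fin m))‖)) ∧
      innerDist X₀ v w ≤
        ENNReal.ofReal (C * ‖(v : EuclideanSpace ℝ (Fin m)) - (w : EuclideanSpace ℝ (Fin m))‖) :=
  stmt3_general C X X₀ hL hX₀c hconv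
end

section
/- The real cusp X = {(x,y) ∈ ℝ² : x² = y³} is not LNE at 0: for every open neighborhood U of 0 and every constant C ≥ 1 there exist points p, q ∈ X ∩ U with d_{X∩U}(p,q) > C‖p − q‖. -/
open Metric Set Filter Topology ENNReal Pointwise

/-!
The points `p = (t³, t²)` and `q = (-t³, t²)` of the cusp are at distance `2t³`, but the only
point of the cusp on the axis `x = 0` is the origin, so by the intermediate value theorem every
path in the cusp from `p` to `q` passes through `0` and has length at least
`‖p‖ + ‖q‖ ≥ 2t²`. The ratio `1/t` is unbounded as `t → 0⁺`.
-/
theorem edist_add_edist_le_pathLength {E : Type*} [PseudoEMetricSpace E] {A : Set E} {p q : A}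
    (γ : Path p q) (s : unitInterval) :
    edist (p : E) (γ s) + edist (γ s : E) q ≤ pathLength γ := by
  have h := eVariationOn.add_le_union (fun t : unitInterval => (γ t : E))
    (s := Iic s) (t := Ici s) fun x hx y hy => le_trans hx hy
  refine le_trans (add_le_add ?_ ?_) (h.trans (eVariationOn.mono _ (subset_univ _)))
  · simpa using eVariationOn.edist_le (fun t : unitInterval => (γ t : E))
      (show (0 : unitInterval) ∈ Iic s from unitInterval.nonneg') self_mem_Iic
  · simpa using eVariationOn.edist_le (fun t : unitInterval => (γ t : E))
      self_mem_Ici (show (1 : unitInterval) ∈ Ici s from unitInterval.le_one')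

theorem edist_add_edist_le_innerDist {E : Type*} [PseudoEMetricSpace E] {A : Set E} {p q : A}
    {z : E} (h : ∀ γ : Path p q, ∃ s, (γ s : E) = z) :
    edist (p : E) z + edist z q ≤ innerDist A p q :=
  le_iInf fun γ => by
    obtain ⟨s, rfl⟩ := h γ
    exact edist_add_edist_le_pathLength γ s

local notation "ℝ²" => EuclideanSpace ℝ (Fin 2)

def cusp : Set (ℝ²) := {v | v 0 ^ 2 = v 1 ^ 3}

theorem eq_zero_of_mem_cusp_of_apply_zero_eq_zero {v : ℝ²} (hv : v ∈ cusp)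
    (h0 : v 0 = 0) : v = 0 := by
  have h1 : v 1 = 0 := pow_eq_zero_iff three_ne_zero |>.mp (by rw [← hv.out, h0]; ring)
  ext i; fin_cases i <;> simp [h0, h1]

theorem Path.exists_eq_zero_of_subset_cusp {A : Set (ℝ²)} (hA : A ⊆ cusp) {p q : A}
    (hp : 0 ≤ (p : ℝ²) 0) (hq : (q : ℝ²) 0 ≤ 0) (γ : Path p q) : ∃ s, (γ s : ℝ²) = 0 := by
  have hcont : Continuous fun s => (γ s : ℝ²) 0 := by fun_prop
  obtain ⟨s, hs⟩ := intermediate_value_univ 1 0 hcont (by simpa using And.intro hq hp)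
  exact ⟨s, eq_zero_of_mem_cusp_of_apply_zero_eq_zero (hA (γ s).2) hs⟩

def cuspPoint (t : ℝ) : ℝ² := !₂[t ^ 3, t ^ 2]

theorem cuspPoint_mem_cusp (t : ℝ) : cuspPoint t ∈ cusp := by
  show (t ^ 3) ^ 2 = (t ^ 2) ^ 3; ring

theorem continuous_cuspPoint : Continuous cuspPoint :=
  (PiLp.continuous_toLp 2 _).comp (by fun_prop)

theorem cuspPoint_zero : cuspPoint 0 = 0 := by
  ext i; fin_cases i <;> simp [cuspPoint]

theorem sq_le_norm_cuspPoint (t : ℝ) : t ^ 2 ≤ ‖cuspPoint t‖ := by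
  simpa [cuspPoint, abs_of_nonneg (sq_nonneg t)] using PiLp.norm_apply_le (cuspPoint t) 1

theorem norm_cuspPoint_sub_cuspPoint_neg (t : ℝ) :
    ‖cuspPoint t - cuspPoint (-t)‖ = 2 * |t| ^ 3 := by
  have h : t ^ 3 - (-t) ^ 3 = 2 * t ^ 3 := by ring
  simp [EuclideanSpace.norm_eq, cuspPoint, Fin.sum_univ_two, h, Real.sqrt_sq_eq_abs, abs_mul]

theorem not_isLNE_cusp_inter {U : Set (ℝ²)} (hU : IsOpen U) (h0 : (0 : ℝ²) ∈ U) (C : ℝ) :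
    ¬ IsLNE C (cusp ∩ U) := by
  simp only [IsLNE, not_forall, not_le]
  have hmemU : ∀ᶠ t in 𝓝 0, cuspPoint t ∈ U ∧ cuspPoint (-t) ∈ U :=
    ((hU.preimage continuous_cuspPoint).inter
      (hU.preimage (continuous_cuspPoint.comp continuous_neg))).mem_nhds
      (by simpa [cuspPoint_zero] using h0)
  have hsmall : ∀ᶠ t in 𝓝 (0 : ℝ), C * t < 1 :=
    ((continuous_const.mul continuous_id).tendsto' 0 0 (mul_zero C)).eventually_lt_const
      zero_lt_one
  obtain ⟨t, ⟨⟨hpU, hqU⟩, hCt⟩, ht⟩ :=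
    ((eventually_nhdsWithin_of_eventually_nhds (hmemU.and hsmall)).and
      (self_mem_nhdsWithin (s := Ioi 0))).exists
  let p : ↥(cusp ∩ U) := ⟨cuspPoint t, cuspPoint_mem_cusp t, hpU⟩
  let q : ↥(cusp ∩ U) := ⟨cuspPoint (-t), cuspPoint_mem_cusp (-t), hqU⟩
  have hthrough : ∀ γ : Path p q, ∃ s, (γ s : ℝ²) = 0 :=
    Path.exists_eq_zero_of_subset_cusp inter_subset_left
      (by simp [p, cuspPoint]; positivity)
      (by simpa [q, cuspPoint] using Odd.pow_nonpos (by decide) (neg_nonpos.2 ht.le))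
  refine ⟨p, q, ?_⟩
  calc ENNReal.ofReal (C * ‖cuspPoint t - cuspPoint (-t)‖)
      < ENNReal.ofReal (t ^ 2 + t ^ 2) := by
        rw [norm_cuspPoint_sub_cuspPoint_neg, abs_of_pos ht,
          ENNReal.ofReal_lt_ofReal_iff (by positivity)]
        nlinarith [pow_pos ht 2]
    _ ≤ ENNReal.ofReal (‖cuspPoint t‖ + ‖cuspPoint (-t)‖) := by
        gcongr
        · exact sq_le_norm_cuspPoint t
        · simpa using sq_le_norm_cuspPoint (-t)
    _ = edist (p : ℝ²) 0 + edist 0 (q : ℝ²) := by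
        rw [edist_zero_right, edist_zero_left, ENNReal.ofReal_add (norm_nonneg _) (norm_nonneg _),
          ofReal_norm, ofReal_norm]
        rfl
    _ ≤ innerDist (cusp ∩ U) p q := edist_add_edist_le_innerDist hthrough

theorem stmt18 :
    ∀ U : Set (EuclideanSpace ℝ (Fin 2)), IsOpen U → (0 : EuclideanSpace ℝ (Fin 2)) ∈ U →
      ∀ C : ℝ, 1 ≤ C →
        ∃ p q : ({v : EuclideanSpace ℝ (Fin 2) | v 0 ^ 2 = v 1 ^ 3} ∩ U : Set (EuclideanSpace ℝ (Fin 2))),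
          ENNReal.ofReal (C * ‖(p : EuclideanSpace ℝ (Fin 2)) - (q : EuclideanSpace ℝ (Fin 2))‖) <
            innerDist ({v : EuclideanSpace ℝ (Fin 2) | v 0 ^ 2 = v 1 ^ 3} ∩ U) p q :=
  fun _ hU h0 C _ => by
    have h := not_isLNE_cusp_inter hU h0 C
    simp only [IsLNE, not_forall, not_le] at h
    exact h
end
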